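/- For all sufficiently large even n there exist probability distributions σ_0 and σ_1 over rectangles U × V with U, V ⊆ {0,1}^n such that: every rectangle U × V in the support of σ_0 satisfies d_H(u,u') ≤ n/4 for all u ∈ U, u' ∈ V (so it is 0-monochromatic for GH_{n,1/4}); every rectangle U × V in the support of σ_1 satisfies d_H(u,v) ≥ 3n/4 for all u ∈ U, v ∈ V (so it is 1-monochromatic for GH_{n,1/4}); and both σ_0 and σ_1 are (2^{−n/100}, ⌊n/100⌋)-hitting rectangle-distributions. -/

import Mathlib

/-- A probability distribution over (combinatorial) rectangles `U × V` with
`U ⊆ α` and `V ⊆ β`. -/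
structure RectDist (α β : Type*) [Fintype α] [Fintype β] where
  prob : Finset α × Finset β → ℝ
  nonneg : ∀ R, 0 ≤ prob R
  sum_one : ∑ R, prob R = 1

open Classical in
/-- The probability, under `σ`, that a sampled rectangle satisfies `P`. -/
noncomputable def rectProb {α β : Type*} [Fintype α] [Fintype β]
    (σ : RectDist α β) (P : Finset α × Finset β → Prop) : ℝ :=
  ∑ R, if P R then σ.prob R else 0

/-- `σ` is a `(δ, h)`-hitting rectangle-distribution: every rectangle `A × B`
with `|A| ≥ 2^{-h}|α|` and `|B| ≥ 2^{-h}|β|` is hit with probability `≥ 1 - δ`. -/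
def IsHitting {α β : Type*} [Fintype α] [Fintype β] [DecidableEq α] [DecidableEq β]
    (σ : RectDist α β) (δ : ℝ) (h : ℕ) : Prop :=
  ∀ (A : Finset α) (B : Finset β),
    (2:ℝ)^(-(h:ℝ)) * (Fintype.card α : ℝ) ≤ (A.card : ℝ) →
    (2:ℝ)^(-(h:ℝ)) * (Fintype.card β : ℝ) ≤ (B.card : ℝ) →
    1 - δ ≤ rectProb σ (fun R => ((R.1 ×ˢ R.2) ∩ (A ×ˢ B)).Nonempty)

/-- `g` has `(δ, h)`-hitting monochromatic rectangle-distributions: for each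
`c ∈ {0,1}` there is a `(δ,h)`-hitting distribution supported on
`c`-monochromatic rectangles of `g`. -/
def HasHittingMonoDists {α β : Type*} [Fintype α] [Fintype β] [DecidableEq α] [DecidableEq β]
    (g : α → β → Bool) (δ : ℝ) (h : ℕ) : Prop :=
  ∀ c : Bool, ∃ σ : RectDist α β, IsHitting σ δ h ∧
    ∀ R, σ.prob R ≠ 0 → ∀ u ∈ R.1, ∀ v ∈ R.2, g u v = c

/-!
Both distributions sample `z` uniformly from the cube and output the rectangle
`B(z, n/8) × B(z, n/8)` (for `σ₀`) or `B(z, n/8) × B(z̄, n/8)` with `z̄` the complement of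
`z` (for `σ₁`); the triangle inequality makes these rectangles monochromatic. Such a rectangle
misses `A × B` only if `z` is at distance `> n/8` from `A`, or its partner is at distance `> n/8`
from `B`.
The distance to a fixed set is 1-Lipschitz, so it concentrates by the bounded-differences
inequality on the cube (Chernoff's bound, with the moment generating function controlled one
coordinate at a time by Hoeffding's two-point estimate). Its lower tail forces the mean distance to
a set of density `2^{-n/100}` to be below `3n/50`, and then its upper tail shows that distance
`n/8 = 3n/50 + 13n/200` is exceeded on at most a `2^{-n/100}/2` fraction of the cube.
-/

open Finset Real
open scoped BigOperators

lemma exp_mul_add_exp_mul_le {a b : ℝ} (hab : |a - b| ≤ 1) (L : ℝ) :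
    (exp (L * a) + exp (L * b)) / 2 ≤ exp (L * ((a + b) / 2) + L ^ 2 / 8) := by
  have hcosh : (exp (L * a) + exp (L * b)) / 2
      = exp (L * ((a + b) / 2)) * cosh (L * (a - b) / 2) := by
    rw [cosh_eq, ← neg_div, mul_div_assoc', mul_add, ← exp_add, ← exp_add]
    ring_nf
  have hsq : (L * (a - b) / 2) ^ 2 / 2 ≤ L ^ 2 / 8 := by
    have : (a - b) ^ 2 ≤ 1 := by nlinarith [sq_abs (a - b), abs_nonneg (a - b)]
    nlinarith [sq_nonneg L]
  rw [hcosh, exp_add]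
  gcongr
  exact (cosh_le_exp_half_sq _).trans (exp_le_exp.mpr hsq)

lemma expect_cube_succ {n : ℕ} (F : (Fin (n + 1) → Bool) → ℝ) :
    𝔼 x, F x = 𝔼 y, (F (Fin.cons true y) + F (Fin.cons false y)) / 2 := by
  rw [Fintype.expect_equiv (Fin.consEquiv fun _ => Bool).symm F (fun p => F (Fin.cons p.1 p.2))
    (fun _ => by simp), ← univ_product_univ, expect_product, expect_comm]
  refine expect_congr rfl fun y _ => ?_
  simp [expect_eq_sum_div_card]

theorem expect_exp_mul_le {n : ℕ} {f : (Fin n → Bool) → ℝ}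
    (hf : ∀ x i b, |f x - f (Function.update x i b)| ≤ 1) (L : ℝ) :
    𝔼 x, exp (L * f x) ≤ exp (L * 𝔼 x, f x + L ^ 2 * n / 8) := by
  induction n with
  | zero => simp [expect_eq_sum_div_card]
  | succ n ih =>
    set g : (Fin n → Bool) → ℝ := fun y => (f (Fin.cons true y) + f (Fin.cons false y)) / 2
    have hg : ∀ y i b, |g y - g (Function.update y i b)| ≤ 1 := by
      intro y i b
      have htrue := hf (Fin.cons true y) i.succ b
      have hfalse := hf (Fin.cons false y) i.succ b
      rw [← Fin.cons_update] at htrue hfalse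
      simp only [g, abs_le] at htrue hfalse ⊢
      constructor <;> linarith [htrue.1, htrue.2, hfalse.1, hfalse.2]
    calc 𝔼 x, exp (L * f x)
        = 𝔼 y, (exp (L * f (Fin.cons true y)) + exp (L * f (Fin.cons false y))) / 2 :=
          expect_cube_succ _
      _ ≤ 𝔼 y, exp (L ^ 2 / 8) * exp (L * g y) := by
          refine expect_le_expect fun y _ => ?_
          have hflip := hf (Fin.cons true y) 0 false
          rw [Fin.update_cons_zero] at hflip
          rw [← exp_add, add_comm (L ^ 2 / 8)]
          exact exp_mul_add_exp_mul_le hflip L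
      _ ≤ exp (L ^ 2 / 8) * exp (L * 𝔼 y, g y + L ^ 2 * n / 8) := by
          rw [← mul_expect]
          gcongr
          exact ih hg
      _ = exp (L * 𝔼 x, f x + L ^ 2 * ↑(n + 1) / 8) := by
          have hmean : 𝔼 y, g y = 𝔼 x, f x := (expect_cube_succ f).symm
          rw [hmean, ← exp_add]
          push_cast
          ring_nf

theorem card_upper_tail_le {n : ℕ} (hn : 0 < n) {f : (Fin n → Bool) → ℝ}
    (hf : ∀ x i b, |f x - f (Function.update x i b)| ≤ 1) {s : ℝ} (hs : 𝔼 x, f x ≤ s) :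
    (#{x | s ≤ f x} : ℝ) ≤ 2 ^ n * exp (-2 * (s - 𝔼 x, f x) ^ 2 / n) := by
  set μ := 𝔼 x, f x
  set L := 4 * (s - μ) / n
  have hL : 0 ≤ L := div_nonneg (by linarith) n.cast_nonneg
  have hmarkov : (#{x | s ≤ f x} : ℝ) * exp (L * s) ≤ 2 ^ n * 𝔼 x, exp (L * f x) := by
    calc (#{x | s ≤ f x} : ℝ) * exp (L * s)
        ≤ ∑ x ∈ {x | s ≤ f x}, exp (L * f x) := by
          rw [← nsmul_eq_mul]
          refine card_nsmul_le_sum _ _ _ fun x hx => ?_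
          gcongr
          exact (mem_filter.mp hx).2
      _ ≤ ∑ x, exp (L * f x) :=
          sum_le_sum_of_subset_of_nonneg (subset_univ _) fun _ _ _ => (exp_pos _).le
      _ = 2 ^ n * 𝔼 x, exp (L * f x) := by
          rw [← Fintype.card_mul_expect]
          simp
  have hexponent : L * μ + L ^ 2 * n / 8 - L * s = -2 * (s - μ) ^ 2 / n := by
    simp only [L]
    field_simp
    ring
  calc (#{x | s ≤ f x} : ℝ)
      ≤ 2 ^ n * exp (L * μ + L ^ 2 * n / 8) / exp (L * s) := by
        rw [le_div_iff₀ (exp_pos _)]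
        exact hmarkov.trans (by gcongr; exact expect_exp_mul_le hf L)
    _ = 2 ^ n * exp (-2 * (s - μ) ^ 2 / n) := by
        rw [← hexponent, exp_sub, mul_div_assoc]

theorem card_lower_tail_le {n : ℕ} (hn : 0 < n) {f : (Fin n → Bool) → ℝ}
    (hf : ∀ x i b, |f x - f (Function.update x i b)| ≤ 1) {s : ℝ} (hs : s ≤ 𝔼 x, f x) :
    (#{x | f x ≤ s} : ℝ) ≤ 2 ^ n * exp (-2 * (𝔼 x, f x - s) ^ 2 / n) := by
  have hneg : ∀ x i b, |-f x - -f (Function.update x i b)| ≤ 1 := fun x i b => by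
    rw [← abs_neg]; convert hf x i b using 2; ring
  have := card_upper_tail_le hn hneg (s := -s) (by rw [expect_neg_distrib]; linarith)
  simp only [neg_le_neg_iff, expect_neg_distrib] at this
  convert this using 4
  ring

section Hamming

variable {ι β : Type*} [Fintype ι] [DecidableEq β]

lemma hammingDist_update_le_one [DecidableEq ι] (x : ι → β) (i : ι) (b : β) :
    hammingDist x (Function.update x i b) ≤ 1 := by
  refine card_le_one.mpr fun j hj k hk => ?_
  simp only [mem_filter, mem_univ, true_and] at hj hk
  by_contra hjk
  rcases eq_or_ne j i with rfl | hji
  · exact hk (Function.update_of_ne (Ne.symm hjk) ..).symm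
  · exact hj (Function.update_of_ne hji ..).symm

def infHammingDist (x : ι → β) {A : Finset (ι → β)} (hA : A.Nonempty) : ℕ :=
  A.inf' hA (hammingDist x)

lemma infHammingDist_le {x a : ι → β} {A : Finset (ι → β)} (hA : A.Nonempty)
    (ha : a ∈ A) :
    infHammingDist x hA ≤ hammingDist x a :=
  inf'_le _ ha

lemma exists_infHammingDist_eq (x : ι → β) {A : Finset (ι → β)} (hA : A.Nonempty) :
    ∃ a ∈ A, infHammingDist x hA = hammingDist x a :=
  exists_mem_eq_inf' hA _

lemma infHammingDist_le_add (x y : ι → β) {A : Finset (ι → β)} (hA : A.Nonempty) :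
    infHammingDist x hA ≤ hammingDist x y + infHammingDist y hA := by
  obtain ⟨a, ha, hya⟩ := exists_infHammingDist_eq y hA
  rw [hya]
  exact (infHammingDist_le hA ha).trans (hammingDist_triangle x y a)

lemma abs_infHammingDist_sub_le (x y : ι → β) {A : Finset (ι → β)} (hA : A.Nonempty) :
    |(infHammingDist x hA : ℝ) - infHammingDist y hA| ≤ hammingDist x y := by
  have hxy : (infHammingDist x hA : ℝ) ≤ hammingDist x y + infHammingDist y hA := by
    exact_mod_cast infHammingDist_le_add x y hA
  have hyx : (infHammingDist y hA : ℝ) ≤ hammingDist x y + infHammingDist x hA := by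
    exact_mod_cast hammingDist_comm x y ▸ infHammingDist_le_add y x hA
  rw [abs_sub_le_iff]
  constructor <;> linarith

lemma abs_infHammingDist_sub_update_le [DecidableEq ι] {A : Finset (ι → β)} (hA : A.Nonempty)
    (x : ι → β) (i : ι) (b : β) :
    |(infHammingDist x hA : ℝ) - infHammingDist (Function.update x i b) hA| ≤ 1 :=
  (abs_infHammingDist_sub_le x _ hA).trans (by exact_mod_cast hammingDist_update_le_one x i b)

variable [DecidableEq ι] [Fintype β]

def hammingBall (x : ι → β) (r : ℕ) : Finset (ι → β) := {y | hammingDist x y ≤ r}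

@[simp]
lemma mem_hammingBall {x y : ι → β} {r : ℕ} :
    y ∈ hammingBall x r ↔ hammingDist x y ≤ r := by
  simp [hammingBall]

lemma disjoint_hammingBall_iff {x : ι → β} {r : ℕ} {A : Finset (ι → β)} :
    Disjoint (hammingBall x r) A ↔ ∀ a ∈ A, r < hammingDist x a := by
  simp [disjoint_right]

lemma hammingDist_le_of_mem_hammingBall {z w u v : ι → β} {r : ℕ}
    (hu : u ∈ hammingBall z r) (hv : v ∈ hammingBall w r) :
    hammingDist u v ≤ hammingDist z w + 2 * r := by
  rw [mem_hammingBall] at hu hv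
  have := hammingDist_triangle u z v
  have := hammingDist_triangle z w v
  rw [hammingDist_comm u z] at *
  omega

lemma hammingDist_center_le_of_mem_hammingBall {z w u v : ι → β} {r : ℕ}
    (hu : u ∈ hammingBall z r) (hv : v ∈ hammingBall w r) :
    hammingDist z w ≤ hammingDist u v + 2 * r := by
  rw [mem_hammingBall] at hu hv
  have := hammingDist_triangle z u w
  have := hammingDist_triangle u v w
  rw [hammingDist_comm w v] at hv
  omega

end Hamming

theorem expect_infHammingDist_le {n : ℕ} (hn : 0 < n) {A : Finset (Fin n → Bool)}
    (hA : A.Nonempty) {t : ℝ} (ht : 0 ≤ t) (hcard : 2 ^ n * exp (-2 * t ^ 2 / n) ≤ #A) :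
    𝔼 z, (infHammingDist z hA : ℝ) ≤ t := by
  by_contra! htμ
  have hμ : 0 ≤ 𝔼 z, (infHammingDist z hA : ℝ) := expect_nonneg fun z _ => Nat.cast_nonneg _
  have hsub : A ⊆ ({z | (infHammingDist z hA : ℝ) ≤ 0} : Finset _) := fun a ha => by
    simpa using infHammingDist_le (x := a) hA ha
  have : (#A : ℝ) < #A := calc
    (#A : ℝ) ≤ #{z | (infHammingDist z hA : ℝ) ≤ 0} := by exact_mod_cast card_le_card hsub
    _ ≤ 2 ^ n * exp (-2 * (𝔼 z, (infHammingDist z hA : ℝ) - 0) ^ 2 / n) :=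
        card_lower_tail_le hn (abs_infHammingDist_sub_update_le hA) hμ
    _ < 2 ^ n * exp (-2 * t ^ 2 / n) := by
        gcongr 2 ^ n * exp ?_
        exact div_lt_div_of_pos_right (by nlinarith) (by exact_mod_cast hn)
    _ ≤ #A := hcard
  exact this.false

theorem card_far_from_le {n : ℕ} (hn : 0 < n) (A : Finset (Fin n → Bool)) {s t : ℝ}
    (hs : 0 ≤ s) (ht : 0 ≤ t) (hcard : 2 ^ n * exp (-2 * t ^ 2 / n) ≤ #A) :
    (#{z | ∀ a ∈ A, s + t ≤ hammingDist z a} : ℝ) ≤ 2 ^ n * exp (-2 * s ^ 2 / n) := by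
  have hA : A.Nonempty :=
    card_pos.mp (by exact_mod_cast (by positivity : (0 : ℝ) < 2 ^ n * exp _).trans_le hcard)
  have hmean := expect_infHammingDist_le hn hA ht hcard
  calc (#{z | ∀ a ∈ A, s + t ≤ hammingDist z a} : ℝ)
      ≤ #{z | s + t ≤ infHammingDist z hA} := by
        gcongr with z
        obtain ⟨a, ha, hza⟩ := exists_infHammingDist_eq z hA
        exact fun hz => hza ▸ hz a ha
    _ ≤ 2 ^ n * exp (-2 * (s + t - 𝔼 z, (infHammingDist z hA : ℝ)) ^ 2 / n) :=
        card_upper_tail_le hn (abs_infHammingDist_sub_update_le hA) (by linarith)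
    _ ≤ 2 ^ n * exp (-2 * s ^ 2 / n) := by
        gcongr 2 ^ n * exp ?_
        exact div_le_div_of_nonneg_right (by nlinarith) (Nat.cast_nonneg n)

namespace RectDist

variable {ι α β : Type*} [Fintype ι] [Nonempty ι] [Fintype α] [Fintype β]
  [DecidableEq α] [DecidableEq β]

noncomputable def ofUniform (rect : ι → Finset α × Finset β) : RectDist α β where
  prob R := #{z | rect z = R} / Fintype.card ι
  nonneg _ := by positivity
  sum_one := by
    rw [← sum_div, div_eq_one_iff_eq (by positivity), ← Nat.cast_sum,
      sum_card_fiberwise_eq_card_filter]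
    simp

lemma exists_eq_of_prob_ofUniform_ne_zero {rect : ι → Finset α × Finset β}
    {R : Finset α × Finset β} (h : (ofUniform rect).prob R ≠ 0) : ∃ z, rect z = R := by
  by_contra! hR
  simp [ofUniform, hR] at h

open Classical in
lemma rectProb_ofUniform (rect : ι → Finset α × Finset β)
    (P : Finset α × Finset β → Prop) :
    rectProb (ofUniform rect) P = #{z | P (rect z)} / Fintype.card ι := by
  rw [rectProb, ← sum_filter]
  simp only [ofUniform]
  rw [← sum_div, ← Nat.cast_sum, sum_card_fiberwise_eq_card_filter]
  simp

theorem isHitting_ofUniform [Nonempty α] (U : α → Finset α) (τ : α ≃ α)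
    {δ : ℝ} {h : ℕ}
    (hU : ∀ A : Finset α, (2 : ℝ) ^ (-(h : ℝ)) * Fintype.card α ≤ #A →
      (#{z | Disjoint (U z) A} : ℝ) ≤ δ / 2 * Fintype.card α) :
    IsHitting (ofUniform fun z => (U z, U (τ z))) δ h := by
  intro A B hA hB
  rw [rectProb_ofUniform]
  simp only [product_inter_product, nonempty_product, ← not_disjoint_iff_nonempty_inter]
  have hmiss :
      (#{z | ¬(¬Disjoint (U z) A ∧ ¬Disjoint (U (τ z)) B)} : ℝ) ≤ δ * Fintype.card α :=
    calc (#{z | ¬(¬Disjoint (U z) A ∧ ¬Disjoint (U (τ z)) B)} : ℝ)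
        ≤ #{z | Disjoint (U z) A} + #{z | Disjoint (U (τ z)) B} := by
          simp only [not_and_or, not_not, filter_or]
          exact_mod_cast card_union_le _ _
      _ = #{z | Disjoint (U z) A} + #{z | Disjoint (U z) B} := by
          congr 2
          exact card_equiv τ (by simp)
      _ ≤ δ / 2 * Fintype.card α + δ / 2 * Fintype.card α := add_le_add (hU A hA) (hU B hB)
      _ = δ * Fintype.card α := by ring
  have hsplit : (#{z | ¬Disjoint (U z) A ∧ ¬Disjoint (U (τ z)) B} : ℝ)
      + #{z | ¬(¬Disjoint (U z) A ∧ ¬Disjoint (U (τ z)) B)} = Fintype.card α := by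
    exact_mod_cast card_filter_add_card_filter_not _
  rw [le_div_iff₀ (by exact_mod_cast Fintype.card_pos)]
  linarith

end RectDist

lemma exp_le_two_rpow {n : ℕ} (hn : 0 < n) :
    exp (-2 * (3 * n / 50) ^ 2 / n) ≤ (2 : ℝ) ^ (-(n : ℝ) / 100) := by
  have hn' : (0 : ℝ) < n := by exact_mod_cast hn
  rw [rpow_def_of_pos two_pos, exp_le_exp,
    show -2 * (3 * n / 50) ^ 2 / n = -(9 / 1250) * (n : ℝ) by field_simp; ring]
  nlinarith [log_two_lt_d9]

lemma exp_le_two_rpow_div_two {n : ℕ} (hn : 500 ≤ n) :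
    exp (-2 * (13 * n / 200) ^ 2 / n) ≤ (2 : ℝ) ^ (-(n : ℝ) / 100) / 2 := by
  have hn' : (500 : ℝ) ≤ n := by exact_mod_cast hn
  calc exp (-2 * (13 * n / 200) ^ 2 / n)
      ≤ exp (log 2 * (-n / 100) - log 2) := by
        rw [exp_le_exp, show -2 * (13 * n / 200) ^ 2 / n = -(169 / 20000) * (n : ℝ) by
          field_simp; ring]
        nlinarith [log_two_lt_d9]
    _ = (2 : ℝ) ^ (-(n : ℝ) / 100) / 2 := by
        rw [exp_sub, exp_log two_pos, rpow_def_of_pos two_pos]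

theorem card_disjoint_hammingBall_le {n : ℕ} (hn : 500 ≤ n) (A : Finset (Fin n → Bool))
    (hA : (2 : ℝ) ^ (-((n / 100 : ℕ) : ℝ)) * 2 ^ n ≤ #A) :
    (#{z | Disjoint (hammingBall z (n / 8)) A} : ℝ) ≤ 2 ^ (-(n : ℝ) / 100) / 2 * 2 ^ n := by
  have hfloor : (2 : ℝ) ^ (-(n : ℝ) / 100) ≤ 2 ^ (-((n / 100 : ℕ) : ℝ)) := by
    gcongr
    · norm_num
    · rw [neg_div, neg_le_neg_iff, le_div_iff₀ (by norm_num)]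
      exact_mod_cast Nat.div_mul_le_self n 100
  calc (#{z | Disjoint (hammingBall z (n / 8)) A} : ℝ)
      ≤ #{z | ∀ a ∈ A, 13 * (n : ℝ) / 200 + 3 * n / 50 ≤ hammingDist z a} := by
        gcongr with z
        intro hz a ha
        rw [disjoint_hammingBall_iff] at hz
        have : (n : ℝ) < 8 * hammingDist z a := by exact_mod_cast (by have := hz a ha; omega)
        linarith
    _ ≤ 2 ^ n * exp (-2 * (13 * n / 200) ^ 2 / n) :=
        card_far_from_le (by omega) A (by positivity) (by positivity)
          (by nlinarith [exp_le_two_rpow (n := n) (by omega), pow_pos (two_pos (α := ℝ)) n])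
    _ ≤ 2 ^ (-(n : ℝ) / 100) / 2 * 2 ^ n := by
        rw [mul_comm]
        gcongr
        exact exp_le_two_rpow_div_two hn

theorem isHitting_ofUniform_hammingBall {n : ℕ} (hn : 500 ≤ n)
    (τ : (Fin n → Bool) ≃ (Fin n → Bool)) :
    IsHitting (RectDist.ofUniform fun z => (hammingBall z (n / 8), hammingBall (τ z) (n / 8)))
      ((2 : ℝ) ^ (-(n : ℝ) / 100)) (n / 100) :=
  RectDist.isHitting_ofUniform _ τ fun A hA => by
    have hcard : (Fintype.card (Fin n → Bool) : ℝ) = 2 ^ n := by simp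
    rw [hcard] at hA ⊢
    exact card_disjoint_hammingBall_le hn A hA

/-- for all sufficiently large even `n` there are rectangle
distributions `σ₀` (supported on rectangles with all pairwise distances `≤ n/4`,
hence 0-monochromatic for `GH_{n,1/4}`) and `σ₁` (supported on rectangles with
all pairwise distances `≥ 3n/4`, hence 1-monochromatic for `GH_{n,1/4}`), both
of which are `(2^{−n/100}, ⌊n/100⌋)`-hitting. -/
theorem gapHamming_has_hitting_mono_dists :
    ∃ N : ℕ, ∀ n ≥ N, Even n →
      ∃ σ₀ σ₁ : RectDist (Fin n → Bool) (Fin n → Bool),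
        (∀ R, σ₀.prob R ≠ 0 →
          ∀ u ∈ R.1, ∀ u' ∈ R.2, (hammingDist u u' : ℝ) ≤ (n:ℝ)/4) ∧
        (∀ R, σ₁.prob R ≠ 0 →
          ∀ u ∈ R.1, ∀ v ∈ R.2, 3*(n:ℝ)/4 ≤ (hammingDist u v : ℝ)) ∧
        IsHitting σ₀ ((2:ℝ) ^ (-(n:ℝ)/100)) (n/100) ∧
        IsHitting σ₁ ((2:ℝ) ^ (-(n:ℝ)/100)) (n/100) := by
  refine ⟨500, fun n hn _ => ?_⟩
  let compl : (Fin n → Bool) ≃ (Fin n → Bool) :=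
    Function.Involutive.toPerm (fun z i => !z i) fun z => funext fun i => Bool.not_not (z i)
  refine ⟨RectDist.ofUniform fun z =>
      (hammingBall z (n / 8), hammingBall (Equiv.refl _ z) (n / 8)),
    RectDist.ofUniform fun z => (hammingBall z (n / 8), hammingBall (compl z) (n / 8)),
    ?_, ?_, isHitting_ofUniform_hammingBall hn _, isHitting_ofUniform_hammingBall hn _⟩
  · rintro R hR u hu v hv
    obtain ⟨z, rfl⟩ := RectDist.exists_eq_of_prob_ofUniform_ne_zero hR
    have hdist := hammingDist_le_of_mem_hammingBall hu hv
    rw [Equiv.refl_apply, hammingDist_self] at hdist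
    rw [le_div_iff₀ (by norm_num)]
    exact_mod_cast (by omega : hammingDist u v * 4 ≤ n)
  · rintro R hR u hu v hv
    obtain ⟨z, rfl⟩ := RectDist.exists_eq_of_prob_ofUniform_ne_zero hR
    have hdist := hammingDist_center_le_of_mem_hammingBall hu hv
    have hcompl : hammingDist z (compl z) = n := by
      show hammingDist z (fun i => !z i) = n
      simp [hammingDist]
    rw [hcompl] at hdist
    rw [div_le_iff₀ (by norm_num)]
    exact_mod_cast (by omega : 3 * n ≤ hammingDist u v * 4)
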